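/- Let R be a commutative Noetherian ring, P a maximal ideal of R, and N ⊊ M finitely generated R-modules. Then N is a P-primary submodule of M if and only if Ann_R(M/N) is a P-primary ideal of R. -/

import Mathlib

/-- `N` is a `P`-primary submodule of `M`: `N` is proper, and `r • v ∈ N` implies `v ∈ N` or
`r ∈ √(Ann_R(M/N))`, where `P = √(Ann_R(M/N)) = √(N :_R M)`. -/
def Submodule.IsPrimaryIn {R M : Type*} [CommRing R] [AddCommGroup M] [Module R M]
    (P : Ideal R) (N : Submodule R M) : Prop :=
  N ≠ ⊤ ∧ (∀ (r : R) (v : M), r • v ∈ N → v ∈ N ∨ r ∈ (Submodule.colon N ⊤).radical) ∧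
    P = (Submodule.colon N ⊤).radical

/-!
If `√(N : M)` is a maximal ideal and `r • v ∈ N` with `r ∉ √(N : M)`, then `√(N : v)` contains
both `√(N : M)` and `r`, hence is all of `R`, so `v ∈ N`. The converse needs no maximality: the
colon ideal of a primary submodule is primary.
-/

namespace Submodule

section CommSemiring

variable {R M : Type*} [CommSemiring R] [AddCommMonoid M] [Module R M] {S : Submodule R M}

theorem isPrimary_iff_mem_or_mem_radical_colon :
    S.IsPrimary ↔ S ≠ ⊤ ∧ ∀ (r : R) (x : M), r • x ∈ S → x ∈ S ∨ r ∈ (S.colon .univ).radical := by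
  simp only [Submodule.IsPrimary, Ideal.mem_radical_iff, ← top_coe (R := R), mem_colon_iff_le]

theorem colon_univ_ne_top (hS : S ≠ ⊤) : S.colon .univ ≠ ⊤ := by
  rwa [Ne, colon_eq_top_iff_subset, Set.univ_subset_iff, coe_eq_univ]

theorem IsPrimary.isPrimary_colon_univ (hS : S.IsPrimary) : (S.colon .univ).IsPrimary := by
  refine Ideal.isPrimary_iff.mpr ⟨colon_univ_ne_top hS.ne_top, fun {a b} hab ↦ ?_⟩
  refine or_iff_not_imp_right.mpr fun hb ↦ mem_colon.mpr fun x _ ↦ ?_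
  have hbax : b • a • x ∈ S := by
    rw [smul_smul, mul_comm]
    exact mem_colon.mp hab x trivial
  exact (hS.mem_or_mem hbax).resolve_right hb

theorem isPrimary_of_isMaximal_radical_colon (h : (S.colon .univ).radical.IsMaximal) :
    S.IsPrimary := by
  refine isPrimary_iff_mem_or_mem_radical_colon.mpr ⟨?_, fun r x hrx ↦ ?_⟩
  · rintro rfl
    exact h.ne_top (by rw [top_colon, Ideal.radical_top])
  refine or_iff_not_imp_right.mpr fun hr ↦ ?_
  have hle : (S.colon .univ).radical ≤ (S.colon {x}).radical :=
    Ideal.radical_mono (colon_mono le_rfl (Set.subset_univ _))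
  have hr' : r ∈ (S.colon {x}).radical := Ideal.le_radical (mem_colon_singleton.mpr hrx)
  have htop : (S.colon {x}).radical = ⊤ :=
    by_contra fun hne ↦ hr ((h.eq_of_le hne hle).ge hr')
  simpa using Ideal.radical_eq_top.mp htop

end CommSemiring

theorem isPrimaryIn_iff {R M : Type*} [CommRing R] [AddCommGroup M] [Module R M]
    {P : Ideal R} {N : Submodule R M} :
    IsPrimaryIn P N ↔ N.IsPrimary ∧ (N.colon .univ).radical = P := by
  rw [IsPrimaryIn, isPrimary_iff_mem_or_mem_radical_colon, and_assoc, eq_comm]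
  rfl

end Submodule

theorem isPrimaryIn_iff_annihilator_isPrimary_general {R M : Type*} [CommRing R]
    [AddCommGroup M] [Module R M]
    (P : Ideal R) (hP : P.IsMaximal) (N : Submodule R M) :
    Submodule.IsPrimaryIn P N ↔
      ((Submodule.colon N ⊤).IsPrimary ∧ (Submodule.colon N ⊤).radical = P) := by
  rw [Submodule.isPrimaryIn_iff]
  refine and_congr_left fun hrad ↦ ⟨Submodule.IsPrimary.isPrimary_colon_univ, fun _ ↦ ?_⟩
  exact Submodule.isPrimary_of_isMaximal_radical_colon (hrad ▸ hP)

/-- If `P` is a maximal ideal of `R` and `N ⊊ M` are finitely generated `R`-modules, then `N` is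
a `P`-primary submodule of `M` iff `Ann_R(M/N) = (N :_R M)` is a `P`-primary ideal of `R`. -/
theorem isPrimaryIn_iff_annihilator_isPrimary {R M : Type*} [CommRing R] [IsNoetherianRing R]
    [AddCommGroup M] [Module R M] [Module.Finite R M]
    (P : Ideal R) (hP : P.IsMaximal) (N : Submodule R M) (hN : N ≠ ⊤) :
    Submodule.IsPrimaryIn P N ↔
      ((Submodule.colon N ⊤).IsPrimary ∧ (Submodule.colon N ⊤).radical = P) :=
  isPrimaryIn_iff_annihilator_isPrimary_general P hP N
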